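/- For every odd k ≥ 3 and every non-conflictual set Φ of tagged k-words, the family HOP(k, Φ) of languages generated by HOP(k) grammars whose tagged k-word set equals Φ is closed under union: if L_1 = L(G_1) and L_2 = L(G_2) with G_1, G_2 ∈ HOP(k, Φ) having disjoint nonterminal alphabets, then the grammar G with the union of nonterminals, rules and axioms generates L_1 ∪ L_2 and is in HOP(k, Φ). -/

import Mathlib

/-!
Common framework from the paper "Higher-order Operator Precedence Languages":
tagged words over an alphabet `α` (with a distinguished end-mark letter
`hash`), the tag set Δ = {[, ], ⊙}, tagged `k`-word factors, conflictual sets,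
the strictly-locally-testable tagged language `Loc(Φ)`, handles, reductions
`⇝_Φ`, and the (tagged) maximal languages `RedBar Φ` / `Red Φ`.

Conventions: an end-word `⍟` is the alternating word `(#⊙)^m #` of (tagged)
length `k-2`, so that it contributes `(k-1)/2` end-marks on each side,
matching all the examples of the paper.
-/

namespace HOP

/-- The three tags `[`, `]`, `⊙`. -/
inductive Tagg : Type where
  | lb : Tagg
  | rb : Tagg
  | dot : Tagg
deriving DecidableEq

/-- Symbols: either a terminal letter of `α` or a tag. -/
abbrev Sym (α : Type) := α ⊕ Tagg

/-- The projection `σ` erasing all tags. -/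
def erase {α : Type} (w : List (Sym α)) : List α := w.filterMap Sum.getLeft?

/-- Tagged words: words in `Σ(ΔΣ)*`, i.e. alternating terminals and tags,
beginning and ending with a terminal. -/
inductive IsTagged {α : Type} : List (Sym α) → Prop where
  | single (a : α) : IsTagged [Sum.inl a]
  | cons (a : α) (t : Tagg) {w : List (Sym α)} :
      IsTagged w → IsTagged (Sum.inl a :: Sum.inr t :: w)

/-- `φ_k(w)`: the set of tagged `k`-words occurring as factors of `w`. -/
def taggedFactors {α : Type} (k : ℕ) (w : List (Sym α)) : Set (List (Sym α)) :=
  {u | u.length = k ∧ IsTagged u ∧ u <:+: w}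

/-- A set of tagged words is conflictual iff it contains two distinct words
with the same tag-erasure. -/
def Conflictual {α : Type} (S : Set (List (Sym α))) : Prop :=
  ∃ x ∈ S, ∃ y ∈ S, x ≠ y ∧ erase x = erase y

def NonConflictual {α : Type} (S : Set (List (Sym α))) : Prop := ¬ Conflictual S

/-- `S` is a set of tagged `k`-words. -/
def TaggedKWords {α : Type} (k : ℕ) (S : Set (List (Sym α))) : Prop :=
  ∀ u ∈ S, IsTagged u ∧ u.length = k

/-- `hashWord hash n = # ⊙ # ⊙ … #` with `n+1` end-marks (tagged length `2n+1`). -/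
def hashWord {α : Type} (hash : α) : ℕ → List (Sym α)
  | 0 => [Sum.inl hash]
  | n + 1 => Sum.inl hash :: Sum.inr Tagg.dot :: hashWord hash n

/-- The end-word `⍟ ∈ (#⊙)*#` used with width `k`: it has tagged length `k-2`
(for odd `k ≥ 3`), i.e. `(k-1)/2` end-marks. -/
def endwFor {α : Type} (hash : α) (k : ℕ) : List (Sym α) := hashWord hash ((k - 3) / 2)

/-- `wrap hash k w = ⍟ [ w ] ⍟`. -/
def wrap {α : Type} (hash : α) (k : ℕ) (w : List (Sym α)) : List (Sym α) :=
  endwFor hash k ++ Sum.inr Tagg.lb :: (w ++ Sum.inr Tagg.rb :: endwFor hash k)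

/-- `finalWord hash k = ⍟ ⊙ ⍟`, the target of a complete reduction. -/
def finalWord {α : Type} (hash : α) (k : ℕ) : List (Sym α) :=
  endwFor hash k ++ Sum.inr Tagg.dot :: endwFor hash k

/-- The (full-word form of the) `k`-strictly-locally-testable tagged language:
all tagged `k`-word factors belong to `Φ`.  A tagged word `w` is in `Loc(Φ)`
in the sense of the paper iff `wrap hash k w ∈ LocFull k Φ`. -/
def LocFull {α : Type} (k : ℕ) (Φ : Set (List (Sym α))) : Set (List (Sym α)) :=
  {w | IsTagged w ∧ taggedFactors k w ⊆ Φ}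

/-- `Loc(Φ)` as a set of tagged words `w` (tested on `⍟[w]⍟`). -/
def LocTagged {α : Type} (hash : α) (k : ℕ) (Φ : Set (List (Sym α))) :
    Set (List (Sym α)) :=
  {w | IsTagged w ∧ wrap hash k w ∈ LocFull k Φ}

/-- The body `x` of a handle `[x]`: a tagged word over `Σ - {#}` whose tags are
all `⊙`. -/
def IsHandleBody {α : Type} (hash : α) (x : List (Sym α)) : Prop :=
  IsTagged x ∧ (∀ t : Tagg, Sum.inr t ∈ x → t = Tagg.dot) ∧ Sum.inl hash ∉ x

/-- One reduction step `w[x]z ⇝_Φ w s z`, allowed when `[x]` is a handle and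
both source and target have all their tagged `k`-factors in `Φ`. -/
def RStep {α : Type} (hash : α) (k : ℕ) (Φ : Set (List (Sym α)))
    (u v : List (Sym α)) : Prop :=
  ∃ w x z, ∃ s : Tagg, IsHandleBody hash x ∧
    u = w ++ Sum.inr Tagg.lb :: (x ++ Sum.inr Tagg.rb :: z) ∧
    v = w ++ Sum.inr s :: z ∧
    u ∈ LocFull k Φ ∧ v ∈ LocFull k Φ

/-- `⇝*_Φ`. -/
def Reduces {α : Type} (hash : α) (k : ℕ) (Φ : Set (List (Sym α))) :
    List (Sym α) → List (Sym α) → Prop :=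
  Relation.ReflTransGen (RStep hash k Φ)

/-- The tagged maximal language `Red̄(Φ)`. -/
def RedBar {α : Type} (hash : α) (k : ℕ) (Φ : Set (List (Sym α))) :
    Set (List (Sym α)) :=
  {w | IsTagged w ∧ Reduces hash k Φ (wrap hash k w) (finalWord hash k)}

/-- The maximal language `Red(Φ) = σ(Red̄(Φ))`. -/
def Red {α : Type} (hash : α) (k : ℕ) (Φ : Set (List (Sym α))) : Set (List α) :=
  erase '' RedBar hash k Φ

/-- Length-`j` factors of a plain word. -/
def plainFactors {α : Type} (j : ℕ) (w : List α) : Set (List α) :=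
  {u | u.length = j ∧ u <:+: w}

/-- The `j`-strictly-locally-testable (plain) language `Loc(F)`, with
end-words `#^(j-1)`; as usual the language is `ε`-free and over `Σ - {#}`. -/
def LocPlain {α : Type} (hash : α) (j : ℕ) (F : Set (List α)) : Set (List α) :=
  {x | x ≠ [] ∧ hash ∉ x ∧
    plainFactors j
      (List.replicate (j - 1) hash ++ x ++ List.replicate (j - 1) hash) ⊆ F}

end HOP

namespace HOP

/-!  Extended context-free grammars (one rule `X → R_X` per nonterminal,
`R_X` a language over `Σ ∪ V_N`), their derivations and languages, the tagged
grammar `Ḡ` obtained via the substitution `ρ` intersected with the pattern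
`R = (V_N ∪ {[})·Σ·((V_N ∪ {⊙})·Σ)*·(V_N ∪ {]})`, and the tagged `k`-word set
`φ_k(⍟ L(Ḡ) ⍟)` of a grammar. -/

/-- A grammar with terminals `T` and nonterminals `N`: one rule `X → R_X`
(with `R_X` a set of words over `T ⊕ N`) for each nonterminal, and a set of
axioms.  Context-free grammars are those whose right-hand-side languages are
finite; extended context-free grammars those whose right-hand sides are
regular. -/
structure Gram (T N : Type) where
  rules : N → Set (List (T ⊕ N))
  axioms : Set N

/-- One derivation step. -/
def GStep {T N : Type} (G : Gram T N) (u v : List (T ⊕ N)) : Prop :=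
  ∃ p X q w, u = p ++ Sum.inr X :: q ∧ w ∈ G.rules X ∧ v = p ++ (w ++ q)

/-- Derivation relation `⇒*`. -/
def GDerives {T N : Type} (G : Gram T N) : List (T ⊕ N) → List (T ⊕ N) → Prop :=
  Relation.ReflTransGen (GStep G)

/-- The language generated by `G`. -/
def GLang {T N : Type} (G : Gram T N) : Set (List T) :=
  {x | ∃ X ∈ G.axioms, GDerives G [Sum.inr X] (x.map Sum.inl)}

/-- Operator (normal) form: no rule right-hand side contains two adjacent
nonterminals. -/
def OperatorForm {T N : Type} (G : Gram T N) : Prop :=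
  ∀ X : N, ∀ w ∈ G.rules X,
    w.Chain' (fun s₁ s₂ => s₁.isLeft = true ∨ s₂.isLeft = true)

/-- The standing assumptions of the paper: no copy rules and no `ε`-rules,
i.e. every right-hand-side word contains at least one terminal. -/
def NoCopyEps {T N : Type} (G : Gram T N) : Prop :=
  ∀ X : N, ∀ w ∈ G.rules X, ∃ a : T, Sum.inl a ∈ w

/-- The substitution `ρ`:  `ρ(a) = {a, a⊙, a], [a}` for a terminal `a`, and
`ρ(X) = {X, [, ], ⊙}` for a nonterminal `X`, applied letterwise. -/
inductive Rho {T N : Type} : List (T ⊕ N) → List (Sym T ⊕ N) → Prop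
  | nil : Rho [] []
  | plain (a : T) {w v} : Rho w v →
      Rho (Sum.inl a :: w) (Sum.inl (Sum.inl a) :: v)
  | dotAfter (a : T) {w v} : Rho w v →
      Rho (Sum.inl a :: w) (Sum.inl (Sum.inl a) :: Sum.inl (Sum.inr Tagg.dot) :: v)
  | rbAfter (a : T) {w v} : Rho w v →
      Rho (Sum.inl a :: w) (Sum.inl (Sum.inl a) :: Sum.inl (Sum.inr Tagg.rb) :: v)
  | lbBefore (a : T) {w v} : Rho w v →
      Rho (Sum.inl a :: w) (Sum.inl (Sum.inr Tagg.lb) :: Sum.inl (Sum.inl a) :: v)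
  | keep (X : N) {w v} : Rho w v → Rho (Sum.inr X :: w) (Sum.inr X :: v)
  | toTag (X : N) (t : Tagg) {w v} : Rho w v →
      Rho (Sum.inr X :: w) (Sum.inl (Sum.inr t) :: v)

/-- `s` is a (plain) terminal symbol. -/
def isT {T N : Type} (s : Sym T ⊕ N) : Prop := ∃ a : T, s = Sum.inl (Sum.inl a)

/-- `s` is a nonterminal symbol. -/
def isNT {T N : Type} (s : Sym T ⊕ N) : Prop := ∃ X : N, s = Sum.inr X

/-- The tag `t` as a (terminal) grammar symbol. -/
def tagS {T N : Type} (t : Tagg) : Sym T ⊕ N := Sum.inl (Sum.inr t)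

/-- The `((V_N ∪ {⊙})·Σ)*·(V_N ∪ {]})` tail of the pattern `R`. -/
inductive RTail {T N : Type} : List (Sym T ⊕ N) → Prop
  | last (s : Sym T ⊕ N) : (isNT s ∨ s = tagS Tagg.rb) → RTail [s]
  | step (m a : Sym T ⊕ N) {rest} : (isNT m ∨ m = tagS Tagg.dot) → isT a →
      RTail rest → RTail (m :: a :: rest)

/-- The pattern `R = (V_N ∪ {[})·Σ·((V_N ∪ {⊙})·Σ)*·(V_N ∪ {]})`. -/
def RPat {T N : Type} (v : List (Sym T ⊕ N)) : Prop :=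
  ∃ b a rest, v = b :: a :: rest ∧ (isNT b ∨ b = tagS Tagg.lb) ∧ isT a ∧ RTail rest

/-- The tagged grammar `Ḡ`: each rule `X → R_X` becomes `X → ρ(R_X) ∩ R`. -/
def taggedGram {T N : Type} (G : Gram T N) : Gram (Sym T) N where
  rules := fun X => {v | ∃ w ∈ G.rules X, Rho w v ∧ RPat v}
  axioms := G.axioms

/-- The set of tagged `k`-words of a grammar: `φ_k(⍟ L(Ḡ) ⍟)`. -/
def phiG {T N : Type} (hash : T) (k : ℕ) (G : Gram T N) : Set (List (Sym T)) :=
  {u | ∃ w ∈ GLang (taggedGram G),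
        u ∈ taggedFactors k (endwFor hash k ++ w ++ endwFor hash k)}

/-- A regular language (over a possibly infinite alphabet): recognized by a
DFA with finitely many states. -/
def IsRegularLang {β : Type} (L : Set (List β)) : Prop :=
  ∃ (σ : Type) (_ : Fintype σ) (M : DFA β σ), ∀ w, w ∈ M.accepts ↔ w ∈ L

/-- `G` is an (extended) context-free grammar in operator form, satisfying the
standing assumptions of the paper: finitely many nonterminals, regular
right-hand sides, no copy/`ε`-rules, no use of the end-mark `#`. -/
def WellFormed {T N : Type} (hash : T) (G : Gram T N) : Prop :=
  Finite N ∧ (∀ X, IsRegularLang (G.rules X)) ∧ OperatorForm G ∧ NoCopyEps G ∧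
    (∀ X, ∀ w ∈ G.rules X, Sum.inl hash ∉ w)

/-- `G` is a HOP(`k`) grammar: the set of tagged `k`-words occurring in the
sentences of its tagged grammar is non-conflictual (Definition 8). -/
def IsHOPg {T N : Type} (hash : T) (k : ℕ) (G : Gram T N) : Prop :=
  NonConflictual (phiG hash k G)

end HOP

namespace HOP

/-- The union grammar of two grammars with disjoint nonterminal alphabets:
nonterminals `N₁ ⊕ N₂`, union of (relabelled) rules and of axioms. -/
def unionGram {T N1 N2 : Type} (G1 : Gram T N1) (G2 : Gram T N2) :
    Gram T (N1 ⊕ N2) where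
  rules := fun X =>
    match X with
    | Sum.inl X1 => (List.map (Sum.map id Sum.inl)) '' G1.rules X1
    | Sum.inr X2 => (List.map (Sum.map id Sum.inr)) '' G2.rules X2
  axioms := Sum.inl '' G1.axioms ∪ Sum.inr '' G2.axioms


/-!
Renaming nonterminals along an injection commutes, in both directions, with derivation steps,
with the substitution `ρ` and with the pattern `R`. So from an axiom `inl X` the union grammar
derives exactly the terminal words that `G₁` derives from `X` (likewise for `G₂`), and its tagged
grammar is the union of the two tagged grammars. Hence its language is `L(G₁) ∪ L(G₂)` and its
tagged `k`-word set is `φ_k(G₁) ∪ φ_k(G₂) = Φ ∪ Φ = Φ`.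
-/

section Relabel

variable {S N M : Type} {f : N → M}

def RulesEmbed (f : N → M) (G : Gram S N) (G' : Gram S M) : Prop :=
  ∀ X, G'.rules (f X) = List.map (Sum.map id f) '' G.rules X

variable {G : Gram S N} {G' : Gram S M}

theorem RulesEmbed.gStep_map (hG : RulesEmbed f G G') {u v : List (S ⊕ N)}
    (h : GStep G u v) : GStep G' (u.map (Sum.map id f)) (v.map (Sum.map id f)) := by
  obtain ⟨p, X, q, w, rfl, hw, rfl⟩ := h
  exact ⟨p.map (Sum.map id f), f X, q.map (Sum.map id f), w.map (Sum.map id f),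
    by simp, hG X ▸ Set.mem_image_of_mem _ hw, by simp⟩

theorem RulesEmbed.exists_gStep_of_map (hG : RulesEmbed f G G') {u : List (S ⊕ N)}
    {v' : List (S ⊕ M)} (h : GStep G' (u.map (Sum.map id f)) v') :
    ∃ v, v' = v.map (Sum.map id f) ∧ GStep G u v := by
  obtain ⟨p, Y, q, w', hu, hw, rfl⟩ := h
  obtain ⟨p₀, r₀, rfl, rfl, hr₀⟩ := List.map_eq_append_iff.mp hu
  obtain ⟨s, q₀, rfl, hs, rfl⟩ := List.map_eq_cons_iff.mp hr₀
  obtain ⟨X, rfl, rfl⟩ : ∃ X, s = Sum.inr X ∧ Y = f X := by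
    cases s <;> simp_all
  obtain ⟨w, hwG, rfl⟩ := hG X ▸ hw
  exact ⟨p₀ ++ (w ++ q₀), by simp, p₀, X, q₀, w, rfl, hwG, rfl⟩

theorem RulesEmbed.gDerives_map (hG : RulesEmbed f G G') {u v : List (S ⊕ N)}
    (h : GDerives G u v) : GDerives G' (u.map (Sum.map id f)) (v.map (Sum.map id f)) :=
  Relation.ReflTransGen.lift (List.map (Sum.map id f)) (fun _ _ => hG.gStep_map) _ _ h

theorem RulesEmbed.exists_gDerives_of_map (hG : RulesEmbed f G G') {u : List (S ⊕ N)}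
    {v' : List (S ⊕ M)} (h : GDerives G' (u.map (Sum.map id f)) v') :
    ∃ v, v' = v.map (Sum.map id f) ∧ GDerives G u v := by
  induction h with
  | refl => exact ⟨u, rfl, .refl⟩
  | tail _ hstep ih =>
    obtain ⟨v, rfl, hv⟩ := ih
    obtain ⟨w, rfl, hw⟩ := hG.exists_gStep_of_map hstep
    exact ⟨w, rfl, hv.tail hw⟩

theorem RulesEmbed.gDerives_terminal_iff (hf : f.Injective) (hG : RulesEmbed f G G') (X : N)
    (x : List S) :
    GDerives G' [Sum.inr (f X)] (x.map Sum.inl) ↔ GDerives G [Sum.inr X] (x.map Sum.inl) := by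
  have hx : (x.map Sum.inl).map (Sum.map id f) = x.map Sum.inl := by simp
  constructor
  · intro h
    obtain ⟨v, hv, hder⟩ := hG.exists_gDerives_of_map (u := [Sum.inr X]) h
    have hφ : (List.map (Sum.map (id : S → S) f)).Injective :=
      List.map_injective_iff.mpr (Sum.map_injective.mpr ⟨Function.injective_id, hf⟩)
    rwa [hφ (hx.trans hv)]
  · intro h
    simpa only [hx, List.map_cons, List.map_nil, Sum.map_inr] using hG.gDerives_map h

theorem RulesEmbed.isChain_of_operatorForm (hG : RulesEmbed f G G') (hop : OperatorForm G)
    (X : N) :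
    ∀ w ∈ G'.rules (f X), w.IsChain (fun s₁ s₂ => s₁.isLeft = true ∨ s₂.isLeft = true) := by
  intro w' hw'
  obtain ⟨w, hw, rfl⟩ := hG X ▸ hw'
  exact List.isChain_map _ |>.mpr <| (hop X w hw).imp fun s₁ s₂ h => by
    simpa only [Sum.isLeft_map] using h

end Relabel

section Tagged

variable {T N M : Type} {f : N → M}

theorem isT_sumMap_iff {s : Sym T ⊕ N} : isT (Sum.map id f s) ↔ isT s := by
  cases s <;> simp [isT]

theorem isNT_sumMap_iff {s : Sym T ⊕ N} : isNT (Sum.map id f s) ↔ isNT s := by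
  cases s <;> simp [isNT]

theorem sumMap_eq_tagS_iff {s : Sym T ⊕ N} {t : Tagg} :
    Sum.map id f s = (tagS t : Sym T ⊕ M) ↔ s = tagS t := by
  cases s <;> simp [tagS]

theorem RTail.map {v : List (Sym T ⊕ N)} (h : RTail v) : RTail (v.map (Sum.map id f)) := by
  induction h with
  | last s hs => exact .last _ (by rwa [isNT_sumMap_iff, sumMap_eq_tagS_iff])
  | step m a hm ha _ ih =>
    exact .step _ _ (by rwa [isNT_sumMap_iff, sumMap_eq_tagS_iff]) (isT_sumMap_iff.mpr ha) ih

theorem RTail.of_map {v : List (Sym T ⊕ N)} (h : RTail (v.map (Sum.map id f))) : RTail v := by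
  generalize hl : v.map (Sum.map id f) = l at h
  induction h generalizing v with
  | last s hs =>
    obtain ⟨s₀, v₀, rfl, rfl, hv₀⟩ := List.map_eq_cons_iff.mp hl
    obtain rfl : v₀ = [] := List.map_eq_nil_iff.mp hv₀
    exact .last s₀ (by rwa [isNT_sumMap_iff, sumMap_eq_tagS_iff] at hs)
  | step m a hm ha _ ih =>
    obtain ⟨m₀, v₁, rfl, rfl, hv₁⟩ := List.map_eq_cons_iff.mp hl
    obtain ⟨a₀, v₂, rfl, rfl, hv₂⟩ := List.map_eq_cons_iff.mp hv₁
    exact .step m₀ a₀ (by rwa [isNT_sumMap_iff, sumMap_eq_tagS_iff] at hm)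
      (isT_sumMap_iff.mp ha) (ih hv₂)

theorem rPat_map_iff {v : List (Sym T ⊕ N)} : RPat (v.map (Sum.map id f)) ↔ RPat v := by
  constructor
  · rintro ⟨b, a, rest, hv, hb, ha, hrest⟩
    obtain ⟨b₀, v₁, rfl, rfl, hv₁⟩ := List.map_eq_cons_iff.mp hv
    obtain ⟨a₀, rest₀, rfl, rfl, rfl⟩ := List.map_eq_cons_iff.mp hv₁
    exact ⟨b₀, a₀, rest₀, rfl, by rwa [isNT_sumMap_iff, sumMap_eq_tagS_iff] at hb,
      isT_sumMap_iff.mp ha, hrest.of_map⟩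
  · rintro ⟨b, a, rest, rfl, hb, ha, hrest⟩
    exact ⟨_, _, rest.map (Sum.map id f), rfl, by rwa [isNT_sumMap_iff, sumMap_eq_tagS_iff],
      isT_sumMap_iff.mpr ha, hrest.map⟩

theorem Rho.map {w : List (T ⊕ N)} {v : List (Sym T ⊕ N)} (h : Rho w v) :
    Rho (w.map (Sum.map id f)) (v.map (Sum.map id f)) := by
  induction h with
  | nil => exact .nil
  | plain a _ ih => exact .plain a ih
  | dotAfter a _ ih => exact .dotAfter a ih
  | rbAfter a _ ih => exact .rbAfter a ih
  | lbBefore a _ ih => exact .lbBefore a ih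
  | keep X _ ih => exact .keep (f X) ih
  | toTag X t _ ih => exact .toTag (f X) t ih

theorem Rho.exists_of_map {w : List (T ⊕ N)} {v' : List (Sym T ⊕ M)}
    (h : Rho (w.map (Sum.map id f)) v') : ∃ v, v' = v.map (Sum.map id f) ∧ Rho w v := by
  induction w generalizing v' with
  | nil =>
    cases h
    exact ⟨[], rfl, .nil⟩
  | cons s w ih =>
    rcases s with a | X
    · cases h with
      | plain _ h =>
        obtain ⟨v, rfl, hv⟩ := ih h
        exact ⟨_ :: v, rfl, .plain a hv⟩
      | dotAfter _ h =>
        obtain ⟨v, rfl, hv⟩ := ih h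
        exact ⟨_ :: _ :: v, rfl, .dotAfter a hv⟩
      | rbAfter _ h =>
        obtain ⟨v, rfl, hv⟩ := ih h
        exact ⟨_ :: _ :: v, rfl, .rbAfter a hv⟩
      | lbBefore _ h =>
        obtain ⟨v, rfl, hv⟩ := ih h
        exact ⟨_ :: _ :: v, rfl, .lbBefore a hv⟩
    · cases h with
      | keep _ h =>
        obtain ⟨v, rfl, hv⟩ := ih h
        exact ⟨_ :: v, rfl, .keep X hv⟩
      | toTag _ t h =>
        obtain ⟨v, rfl, hv⟩ := ih h
        exact ⟨_ :: v, rfl, .toTag X t hv⟩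

theorem RulesEmbed.taggedGram {G : Gram T N} {G' : Gram T M} (hG : RulesEmbed f G G') :
    RulesEmbed f (taggedGram G) (taggedGram G') := by
  intro X
  ext v'
  simp only [HOP.taggedGram, hG X, Set.mem_image, exists_exists_and_eq_and]
  constructor
  · rintro ⟨w, hw, hρ, hR⟩
    obtain ⟨v, rfl, hv⟩ := Rho.exists_of_map hρ
    exact ⟨v, ⟨w, hw, hv, rPat_map_iff.mp hR⟩, rfl⟩
  · rintro ⟨v, ⟨w, hw, hv, hR⟩, rfl⟩
    exact ⟨w, hw, hv.map, rPat_map_iff.mpr hR⟩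

end Tagged

section Union

variable {T N1 N2 : Type}

theorem rulesEmbed_inl_unionGram (G1 : Gram T N1) (G2 : Gram T N2) :
    RulesEmbed Sum.inl G1 (unionGram G1 G2) := fun _ => rfl

theorem rulesEmbed_inr_unionGram (G1 : Gram T N1) (G2 : Gram T N2) :
    RulesEmbed Sum.inr G2 (unionGram G1 G2) := fun _ => rfl

theorem gLang_unionGram (G1 : Gram T N1) (G2 : Gram T N2) :
    GLang (unionGram G1 G2) = GLang G1 ∪ GLang G2 := by
  have h1 := (rulesEmbed_inl_unionGram G1 G2).gDerives_terminal_iff Sum.inl_injective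
  have h2 := (rulesEmbed_inr_unionGram G1 G2).gDerives_terminal_iff Sum.inr_injective
  ext x
  simp only [GLang, unionGram, Set.mem_union, Set.mem_image, Set.mem_ofPred_eq]
  constructor
  · rintro ⟨_, ⟨X, hX, rfl⟩ | ⟨X, hX, rfl⟩, hd⟩
    exacts [.inl ⟨X, hX, (h1 X x).mp hd⟩, .inr ⟨X, hX, (h2 X x).mp hd⟩]
  · rintro (⟨X, hX, hd⟩ | ⟨X, hX, hd⟩)
    exacts [⟨_, .inl ⟨X, hX, rfl⟩, (h1 X x).mpr hd⟩, ⟨_, .inr ⟨X, hX, rfl⟩, (h2 X x).mpr hd⟩]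

theorem taggedGram_unionGram (G1 : Gram T N1) (G2 : Gram T N2) :
    taggedGram (unionGram G1 G2) = unionGram (taggedGram G1) (taggedGram G2) := by
  have h1 := (rulesEmbed_inl_unionGram G1 G2).taggedGram
  have h2 := (rulesEmbed_inr_unionGram G1 G2).taggedGram
  show Gram.mk _ _ = Gram.mk _ _
  congr 1
  funext X
  rcases X with X | X
  exacts [h1 X, h2 X]

theorem phiG_unionGram (hash : T) (k : ℕ) (G1 : Gram T N1) (G2 : Gram T N2) :
    phiG hash k (unionGram G1 G2) = phiG hash k G1 ∪ phiG hash k G2 := by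
  ext u
  simp only [phiG, taggedGram_unionGram, gLang_unionGram, Set.mem_ofPred_eq, Set.mem_union,
    or_and_right, exists_or]

theorem OperatorForm.unionGram {G1 : Gram T N1} {G2 : Gram T N2} (h1 : OperatorForm G1)
    (h2 : OperatorForm G2) : OperatorForm (unionGram G1 G2) := by
  rintro (X | X)
  exacts [(rulesEmbed_inl_unionGram G1 G2).isChain_of_operatorForm h1 X,
    (rulesEmbed_inr_unionGram G1 G2).isChain_of_operatorForm h2 X]

end Union

theorem hop_union_general {T N1 N2 : Type} (hash : T) (k : ℕ)
    (Φ : Set (List (Sym T)))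
    (G1 : Gram T N1) (G2 : Gram T N2)
    (hwf1 : WellFormed hash G1) (hwf2 : WellFormed hash G2)
    (hΦ1 : phiG hash k G1 = Φ) (hΦ2 : phiG hash k G2 = Φ) :
    GLang (unionGram G1 G2) = GLang G1 ∪ GLang G2 ∧
    OperatorForm (unionGram G1 G2) ∧
    phiG hash k (unionGram G1 G2) = Φ :=
  ⟨gLang_unionGram G1 G2, hwf1.2.2.1.unionGram hwf2.2.2.1,
    by rw [phiG_unionGram, hΦ1, hΦ2, Set.union_self]⟩

/-- **Theorem 6, union case**: if `G₁, G₂ ∈ HOP(k, Φ)` (with disjoint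
nonterminal alphabets), then the union grammar generates `L(G₁) ∪ L(G₂)` and
is again in `HOP(k, Φ)` (its tagged `k`-word set is `Φ`). -/
theorem hop_union {T N1 N2 : Type} (hash : T) (k : ℕ) (hk : Odd k)
    (hk3 : 3 ≤ k) (Φ : Set (List (Sym T))) (hΦ : NonConflictual Φ)
    (G1 : Gram T N1) (G2 : Gram T N2)
    (hwf1 : WellFormed hash G1) (hwf2 : WellFormed hash G2)
    (hΦ1 : phiG hash k G1 = Φ) (hΦ2 : phiG hash k G2 = Φ) :
    GLang (unionGram G1 G2) = GLang G1 ∪ GLang G2 ∧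
    OperatorForm (unionGram G1 G2) ∧
    phiG hash k (unionGram G1 G2) = Φ :=
  hop_union_general hash k Φ G1 G2 hwf1 hwf2 hΦ1 hΦ2

end HOP
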